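/- If an intersection of level-0 function types ⋀_{i∈I} (T_i → T'_i)^0 is congruent to a single function type (T → T')^0, then T_i ≡ T for all i ∈ I, and ⋀_{i∈I} T'_i ≡ T'. -/

import Mathlib

set_option linter.unusedVariables false

-- Primitive types and term types of the unbind/rebind calculus.
mutual
inductive PrimTy : Type where
  | int : PrimTy
  | code : PrimTy
  | arrow : Ty → Ty → PrimTy
inductive Ty : Type where
  | prim : PrimTy → ℕ → Ty
  | inter : Ty → Ty → Ty
end

/-- `T.raise k` increases all top-level conjunct levels by `k` (written `T^{+k}`). -/
def Ty.raise : Ty → ℕ → Ty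
  | .prim τ ℓ, k => .prim τ (ℓ + k)
  | .inter T1 T2, k => .inter (T1.raise k) (T2.raise k)

/-- Congruence on types. -/
inductive TyEq : Ty → Ty → Prop where
  | refl : TyEq T T
  | symm : TyEq T1 T2 → TyEq T2 T1
  | trans : TyEq T1 T2 → TyEq T2 T3 → TyEq T1 T3
  | interCongr : TyEq T1 T1' → TyEq T2 T2' → TyEq (.inter T1 T2) (.inter T1' T2')
  | arrowCongr : TyEq T1 T1' → TyEq T2 T2' →
      TyEq (.prim (.arrow T1 T2) ℓ) (.prim (.arrow T1' T2') ℓ)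
  | idem : TyEq T (.inter T T)
  | comm : TyEq (.inter T1 T2) (.inter T2 T1)
  | assoc : TyEq (.inter T1 (.inter T2 T3)) (.inter (.inter T1 T2) T3)
  | distrib : TyEq (.inter (.prim (.arrow T T1) ℓ) (.prim (.arrow T T2) ℓ))
      (.prim (.arrow T (.inter T1 T2)) ℓ)
  | shift : TyEq (.prim (.arrow T' (Ty.raise T ℓ')) (ℓ+1)) (.prim (.arrow T' (Ty.raise T (ℓ'+1))) ℓ)

/-- Subtyping on types. -/
inductive TySub : Ty → Ty → Prop where
  | int : TySub (.prim .int ℓ) (.prim .int (ℓ+1))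
  | interElim : TySub (.inter T1 T2) T1
  | arrow : TySub T2 T1 → TySub T1' T2' →
      TySub (.prim (.arrow T1 T1') ℓ) (.prim (.arrow T2 T2') ℓ)
  | mono : TySub T1 T1' → TySub T2 T2' → TySub (.inter T1 T2) (.inter T1' T2')
  | trans : TySub T1 T2 → TySub T2 T3 → TySub T1 T3
  | ofEq : TyEq T1 T2 → TySub T1 T2

/-- Value types: intersections with at least one conjunct of level 0. -/
inductive IsValueTy : Ty → Prop where
  | prim : IsValueTy (.prim τ 0)
  | inter : IsValueTy V → IsValueTy (.inter V T)

/-- `bigInter T Ts` is the intersection of the nonempty family `T :: Ts`. -/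
def bigInter : Ty → List Ty → Ty
  | T, [] => T
  | T, T' :: Ts => .inter T (bigInter T' Ts)

abbrev TCtx := List (String × Ty)

/-- Terms of the unbind/rebind calculus. -/
inductive Tm : Type where
  | var : String → Tm
  | num : ℤ → Tm
  | add : Tm → Tm → Tm
  | lam : String → Tm → Tm
  | app : Tm → Tm → Tm
  | unbind : TCtx → Tm → Tm
  | rebind : Tm → List (String × Ty × Tm) → Tm
  | error : Tm

abbrev TSubst := List (String × Ty × Tm)
abbrev USubst := List (String × Tm)

inductive IsValue : Tm → Prop where
  | lam : IsValue (.lam x t)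
  | unbind : IsValue (.unbind Γ t)
  | num : IsValue (.num n)

mutual
/-- Free variables of a term. -/
def FV : Tm → Finset String
  | .var x => {x}
  | .num _ => ∅
  | .add t1 t2 => FV t1 ∪ FV t2
  | .lam x t => FV t \ {x}
  | .app t1 t2 => FV t1 ∪ FV t2
  | .unbind Γ' t => FV t \ (Γ'.map Prod.fst).toFinset
  | .rebind t r => FV t ∪ FVr r
  | .error => ∅
/-- Free variables of a typed substitution. -/
def FVr : List (String × Ty × Tm) → Finset String
  | [] => ∅
  | p :: r => FV p.2.2 ∪ FVr r
end

/-- Free variables of an untyped substitution. -/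
def FVu (σ : USubst) : Finset String := σ.foldr (fun p acc => FV p.2 ∪ acc) ∅

mutual
/-- `SubstM t σ t'` : the (capture-avoiding, partial) application of the
substitution `σ` to `t` is defined and equals `t'`. -/
inductive SubstM : Tm → USubst → Tm → Prop where
  | varHit : σ.lookup x = some v → SubstM (.var x) σ v
  | varMiss : σ.lookup x = none → SubstM (.var x) σ (.var x)
  | num : SubstM (.num n) σ (.num n)
  | error : SubstM .error σ .error
  | add : SubstM t1 σ t1' → SubstM t2 σ t2' → SubstM (.add t1 t2) σ (.add t1' t2')
  | app : SubstM t1 σ t1' → SubstM t2 σ t2' → SubstM (.app t1 t2) σ (.app t1' t2')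
  | lam : x ∉ FVu σ → SubstM t (σ.filter (fun p => p.1 != x)) t' →
      SubstM (.lam x t) σ (.lam x t')
  | unbind : (∀ y ∈ Γ'.map Prod.fst, y ∉ FVu σ) →
      SubstM t (σ.filter (fun p => !(Γ'.map Prod.fst).contains p.1)) t' →
      SubstM (.unbind Γ' t) σ (.unbind Γ' t')
  | rebind : SubstM t σ t' → SubstML r σ r' → SubstM (.rebind t r) σ (.rebind t' r')
inductive SubstML : TSubst → USubst → TSubst → Prop where
  | nil : SubstML [] σ []
  | cons : SubstM u σ u' → SubstML r σ r' → SubstML ((x,T,u) :: r) σ ((x,T,u') :: r')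
end

mutual
/-- The intersection type system with levels. -/
inductive Typed : TCtx → Tm → Ty → Prop where
  | var : Γ.lookup x = some T → Typed Γ (.var x) T
  | num : Typed Γ (.num n) (.prim .int 0)
  | sum : Typed Γ t1 (.prim .int ℓ) → Typed Γ t2 (.prim .int ℓ) →
      Typed Γ (.add t1 t2) (.prim .int ℓ)
  | error : Typed Γ .error T
  | abs : Γ.lookup x = none → Typed ((x,T) :: Γ) t T' →
      Typed Γ (.lam x t) (.prim (.arrow T T') 0)
  | app : Typed Γ t1 (.prim (.arrow V T) 0) → IsValueTy V → Typed Γ t2 V →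
      Typed Γ (.app t1 t2) T
  | unbind0 : (∀ x ∈ Γ'.map Prod.fst, Γ.lookup x = none) → Typed (Γ' ++ Γ) t T →
      Typed Γ (.unbind Γ' t) (.prim .code 0)
  | unbind : (∀ x ∈ Γ'.map Prod.fst, Γ.lookup x = none) → Typed (Γ' ++ Γ) t T →
      Typed Γ (.unbind Γ' t) (T.raise 1)
  | rebind : Typed Γ t (T.raise 1) → SubstOk Γ r → Typed Γ (.rebind t r) T
  | inter : Typed Γ t T1 → Typed Γ t T2 → Typed Γ t (.inter T1 T2)
  | sub : Typed Γ t T → TySub T T' → Typed Γ t T'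
/-- `SubstOk Γ r` : the typed substitution `r` is well typed in `Γ`. -/
inductive SubstOk : TCtx → TSubst → Prop where
  | nil : SubstOk Γ []
  | cons : Typed Γ u V → IsValueTy V → TySub V T → SubstOk Γ r →
      SubstOk Γ ((x,T,u) :: r)
end

/-- All terms of a typed substitution are values. -/
def IsValSubst (r : TSubst) : Prop := ∀ p ∈ r, IsValue p.2.2

/-- `Γ' ⊆` the type context extracted from `r`. -/
def CtxSub (Γ' : TCtx) (r : TSubst) : Prop := ∀ x T, (x,T) ∈ Γ' → ∃ u, (x,T,u) ∈ r

/-- The untyped substitution extracted from `r`, restricted to variables in `xs`. -/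
def restrictTo (r : TSubst) (xs : List String) : USubst :=
  (r.filter (fun p => xs.contains p.1)).map (fun p => (p.1, p.2.2))

/-- Evaluation contexts. -/
inductive ECtx : Type where
  | hole : ECtx
  | addL : ECtx → Tm → ECtx
  | addR : ℤ → ECtx → ECtx
  | appL : ECtx → Tm → ECtx
  | appR : Tm → ECtx → ECtx
  | reb : Tm → TSubst → String → Ty → ECtx → ECtx

def plug : ECtx → Tm → Tm
  | .hole, u => u
  | .addL E t, u => .add (plug E u) t
  | .addR n E, u => .add (.num n) (plug E u)
  | .appL E t, u => .app (plug E u) t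
  | .appR v E, u => .app v (plug E u)
  | .reb t r x T E, u => .rebind t (r ++ [(x, T, plug E u)])

/-- Well-formed evaluation contexts (`v E` requires `v` a value). -/
inductive IsECtx : ECtx → Prop where
  | hole : IsECtx .hole
  | addL : IsECtx E → IsECtx (.addL E t)
  | addR : IsECtx E → IsECtx (.addR n E)
  | appL : IsECtx E → IsECtx (.appL E t)
  | appR : IsValue v → IsECtx E → IsECtx (.appR v E)
  | reb : IsECtx E → IsECtx (.reb t r x T E)

/-- Call-by-value reduction. -/
inductive Step : Tm → Tm → Prop where
  | sum : Step (.add (.num n1) (.num n2)) (.num (n1 + n2))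
  | app : IsValue v → SubstM t [(x, v)] t' → Step (.app (.lam x t) v) t'
  | rebindUnbindYes : IsValSubst r → CtxSub Γ' r →
      SubstM t (restrictTo r (Γ'.map Prod.fst)) t' →
      Step (.rebind (.unbind Γ' t) r) t'
  | rebindUnbindNo : IsValSubst r → ¬ CtxSub Γ' r →
      Step (.rebind (.unbind Γ' t) r) .error
  | rebindNum : IsValSubst r → Step (.rebind (.num n) r) (.num n)
  | rebindSum : IsValSubst r →
      Step (.rebind (.add t1 t2) r) (.add (.rebind t1 r) (.rebind t2 r))
  | rebindAbs : IsValSubst r → Step (.rebind (.lam x t) r) (.lam x (.rebind t r))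
  | rebindApp : IsValSubst r →
      Step (.rebind (.app t1 t2) r) (.app (.rebind t1 r) (.rebind t2 r))
  | rebindRebind : IsValSubst rv → Step (.rebind t r) t' →
      Step (.rebind (.rebind t r) rv) (.rebind t' rv)
  | rebindError : IsValSubst r → Step (.rebind .error r) .error
  | ctx : E ≠ .hole → IsECtx E → Step t t' → Step (plug E t) (plug E t')
  | ctxError : E ≠ .hole → IsECtx E → Step t .error → Step (plug E t) .error

/-- Level-0 arrow type from a pair of types. -/
def arr0 (p : Ty × Ty) : Ty := .prim (.arrow p.1 p.2) 0

/-- Primitive type with a level. -/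
def primL (p : PrimTy × ℕ) : Ty := .prim p.1 p.2

/-!
Every type is congruent to the intersection of its *atoms*: `int` and `code` types with their
level, and level-0 arrows whose domain is in normal form and whose codomain is an atom. The
level-shifting rule lets one push the level of an arrow into its codomain, and distributivity
splits an arrow over the conjuncts of its codomain. The finite set of atoms is invariant under
every rule of `≡`, hence a complete invariant. An intersection of level-0 arrows
`(Tᵢ → T'ᵢ)⁰` has as atoms the arrows `(nf Tᵢ → c)⁰` with `c` an atom of `T'ᵢ`; comparing them
with the atoms `(nf T → c)⁰` of `(T → T')⁰` gives `nf Tᵢ = nf T` and `⋃ atoms T'ᵢ = atoms T'`.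
-/

noncomputable instance : DecidableEq Ty := Classical.decEq _

@[elab_as_elim, induction_eliminator]
theorem Ty.induction {motive : Ty → Prop}
    (int : ∀ ℓ, motive (.prim .int ℓ)) (code : ∀ ℓ, motive (.prim .code ℓ))
    (arrow : ∀ T1 T2 ℓ, motive T1 → motive T2 → motive (.prim (.arrow T1 T2) ℓ))
    (inter : ∀ T1 T2, motive T1 → motive T2 → motive (.inter T1 T2)) (T : Ty) : motive T :=
  Ty.rec (motive_1 := fun τ => ∀ ℓ, motive (.prim τ ℓ)) (motive_2 := motive)
    int code (fun T1 T2 h1 h2 ℓ => arrow T1 T2 ℓ h1 h2) (fun _ ℓ hτ => hτ ℓ) inter T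

/-- `listInter []` is a junk value: the lemmas below are about nonempty lists. -/
def listInter : List Ty → Ty
  | [] => .prim .int 0
  | [t] => t
  | t :: u :: l => .inter t (listInter (u :: l))

lemma listInter_cons (t : Ty) {l : List Ty} (h : l ≠ []) :
    listInter (t :: l) = .inter t (listInter l) := by
  cases l with
  | nil => exact absurd rfl h
  | cons u l => rfl

lemma tyEq_listInter_inter_of_mem {l : List Ty} {t : Ty} (ht : t ∈ l) :
    TyEq (listInter l) (.inter t (listInter l)) := by
  induction l with
  | nil => cases ht
  | cons x l ih =>
    cases l with
    | nil =>
      obtain rfl := List.mem_singleton.1 ht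
      exact TyEq.idem
    | cons u l =>
      rw [listInter_cons x (List.cons_ne_nil u l)]
      rcases List.mem_cons.1 ht with rfl | ht
      · exact (TyEq.interCongr TyEq.idem TyEq.refl).trans TyEq.assoc.symm
      · exact (TyEq.interCongr TyEq.refl (ih ht)).trans
          (TyEq.assoc.trans ((TyEq.interCongr TyEq.comm TyEq.refl).trans TyEq.assoc.symm))

lemma tyEq_inter_listInter_of_subset {l1 l2 : List Ty} (h1 : l1 ≠ []) (hsub : l1 ⊆ l2) :
    TyEq (.inter (listInter l1) (listInter l2)) (listInter l2) := by
  induction l1 with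
  | nil => exact absurd rfl h1
  | cons t l ih =>
    have ht := tyEq_listInter_inter_of_mem (hsub List.mem_cons_self)
    cases l with
    | nil => exact ht.symm
    | cons u l =>
      rw [listInter_cons t (List.cons_ne_nil u l)]
      exact TyEq.assoc.symm.trans ((TyEq.interCongr TyEq.refl
        (ih (List.cons_ne_nil u l) (List.subset_of_cons_subset hsub))).trans ht.symm)

lemma tyEq_listInter_of_mem_iff {l1 l2 : List Ty} (h1 : l1 ≠ []) (h2 : l2 ≠ [])
    (h : ∀ x, x ∈ l1 ↔ x ∈ l2) : TyEq (listInter l1) (listInter l2) :=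
  (tyEq_inter_listInter_of_subset h2 fun x hx => (h x).2 hx).symm.trans
    (TyEq.comm.trans (tyEq_inter_listInter_of_subset h1 fun x hx => (h x).1 hx))

lemma tyEq_inter_listInter_append {l1 l2 : List Ty} (h1 : l1 ≠ []) (h2 : l2 ≠ []) :
    TyEq (.inter (listInter l1) (listInter l2)) (listInter (l1 ++ l2)) := by
  induction l1 with
  | nil => exact absurd rfl h1
  | cons t l ih =>
    cases l with
    | nil =>
      rw [List.singleton_append, listInter_cons t h2]
      exact TyEq.refl
    | cons u l =>
      rw [listInter_cons t (List.cons_ne_nil u l), List.cons_append,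
        listInter_cons t (by simp)]
      exact TyEq.assoc.symm.trans (TyEq.interCongr TyEq.refl (ih (List.cons_ne_nil u l)))

lemma tyEq_listInter_of_forall₂ {l1 l2 : List Ty} (h : List.Forall₂ TyEq l1 l2) :
    TyEq (listInter l1) (listInter l2) := by
  induction h with
  | nil => exact TyEq.refl
  | @cons a b l1 l2 hab htail ih =>
    cases htail with
    | nil => exact hab
    | cons => exact TyEq.interCongr hab ih

lemma Ty.raise_zero (T : Ty) : T.raise 0 = T := by
  induction T with
  | inter T1 T2 h1 h2 => simp [Ty.raise, h1, h2]
  | _ => rfl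

lemma raise_listInter {l : List Ty} (h : l ≠ []) (k : ℕ) :
    (listInter l).raise k = listInter (l.map (·.raise k)) := by
  induction l with
  | nil => exact absurd rfl h
  | cons t l ih =>
    cases l with
    | nil => rfl
    | cons u l =>
      rw [listInter_cons t (List.cons_ne_nil u l), List.map_cons,
        listInter_cons (t.raise k) (by simp), ← ih (List.cons_ne_nil u l)]
      rfl

lemma tyEq_arrow_level_add (D C : Ty) (m k : ℕ) :
    TyEq (.prim (.arrow D C) (m + k)) (.prim (.arrow D (C.raise k)) m) := by
  induction k generalizing m with
  | zero => rw [Ty.raise_zero]; exact TyEq.refl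
  | succ k ih =>
    rw [← Nat.add_assoc, Nat.add_right_comm]
    exact (ih (m + 1)).trans TyEq.shift

lemma tyEq_arrow_listInter (D : Ty) (ℓ : ℕ) {l : List Ty} (h : l ≠ []) :
    TyEq (.prim (.arrow D (listInter l)) ℓ)
      (listInter (l.map (fun c => Ty.prim (.arrow D c) ℓ))) := by
  induction l with
  | nil => exact absurd rfl h
  | cons t l ih =>
    cases l with
    | nil => exact TyEq.refl
    | cons u l =>
      rw [listInter_cons t (List.cons_ne_nil u l), List.map_cons,
        listInter_cons (Ty.prim (.arrow D t) ℓ) (by simp)]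
      exact TyEq.distrib.symm.trans (TyEq.interCongr TyEq.refl (ih (List.cons_ne_nil u l)))

/-- `T^{+k}` on atoms: the shift of an arrow is pushed into its codomain, by level shifting. -/
def atomRaise (k : ℕ) : Ty → Ty
  | .prim (.arrow D c) m => .prim (.arrow D (atomRaise k c)) m
  | .prim .int m => .prim .int (m + k)
  | .prim .code m => .prim .code (m + k)
  | .inter a b => .inter (atomRaise k a) (atomRaise k b)

lemma atomRaise_zero (c : Ty) : atomRaise 0 c = c := by
  induction c with
  | arrow T1 T2 ℓ _ h2 => simp [atomRaise, h2]
  | inter T1 T2 h1 h2 => simp [atomRaise, h1, h2]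
  | _ => rfl

lemma atomRaise_atomRaise (c : Ty) (a b : ℕ) :
    atomRaise b (atomRaise a c) = atomRaise (a + b) c := by
  induction c with
  | arrow T1 T2 ℓ _ h2 => simp [atomRaise, h2]
  | inter T1 T2 h1 h2 => simp [atomRaise, h1, h2]
  | _ => simp [atomRaise, Nat.add_assoc]

lemma tyEq_raise_atomRaise (c : Ty) (k : ℕ) : TyEq (c.raise k) (atomRaise k c) := by
  induction c with
  | arrow D c m _ h2 => exact (tyEq_arrow_level_add D c m k).trans (TyEq.arrowCongr TyEq.refl h2)
  | inter T1 T2 h1 h2 => exact TyEq.interCongr h1 h2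
  | _ => exact TyEq.refl

lemma tyEq_arrow_listInter_atomRaise (D : Ty) (ℓ : ℕ) {l : List Ty} (hl : l ≠ []) :
    TyEq (.prim (.arrow D (listInter l)) ℓ)
      (listInter (l.map (fun c => .prim (.arrow D (atomRaise ℓ c)) 0))) := by
  have hshift := tyEq_arrow_level_add D (listInter l) 0 ℓ
  rw [Nat.zero_add, raise_listInter hl] at hshift
  have hsplit := hshift.trans (tyEq_arrow_listInter D 0 (by simpa using hl))
  rw [List.map_map] at hsplit
  refine hsplit.trans (tyEq_listInter_of_forall₂ ?_)
  exact List.forall₂_map_left_iff.2 (List.forall₂_map_right_iff.2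
    (List.forall₂_same.2 fun c _ => TyEq.arrowCongr TyEq.refl (tyEq_raise_atomRaise c ℓ)))

noncomputable def atoms : Ty → Finset Ty
  | .prim .int ℓ => {.prim .int ℓ}
  | .prim .code ℓ => {.prim .code ℓ}
  | .prim (.arrow T1 T2) ℓ =>
      (atoms T2).image (fun c => .prim (.arrow (listInter (atoms T1).toList) (atomRaise ℓ c)) 0)
  | .inter T1 T2 => atoms T1 ∪ atoms T2

noncomputable def normalForm (T : Ty) : Ty := listInter (atoms T).toList

lemma atoms_arrow (T1 T2 : Ty) (ℓ : ℕ) :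
    atoms (.prim (.arrow T1 T2) ℓ) =
      (atoms T2).image (fun c => .prim (.arrow (normalForm T1) (atomRaise ℓ c)) 0) :=
  rfl

lemma atoms_arrow_zero (T1 T2 : Ty) :
    atoms (.prim (.arrow T1 T2) 0) =
      (atoms T2).image (fun c => .prim (.arrow (normalForm T1) c) 0) := by
  simp only [atoms_arrow, atomRaise_zero]

lemma atoms_nonempty (T : Ty) : (atoms T).Nonempty := by
  induction T with
  | arrow T1 T2 ℓ _ h2 => exact h2.image _
  | inter T1 T2 h1 _ => exact h1.mono Finset.subset_union_left
  | _ => exact Finset.singleton_nonempty _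

lemma toList_atoms_ne_nil (T : Ty) : (atoms T).toList ≠ [] :=
  (Finset.toList_eq_nil.not).2 (atoms_nonempty T).ne_empty

lemma atoms_raise (T : Ty) (k : ℕ) : atoms (T.raise k) = (atoms T).image (atomRaise k) := by
  induction T with
  | arrow T1 T2 ℓ _ _ =>
    simp only [Ty.raise, atoms_arrow, Finset.image_image]
    exact Finset.image_congr fun c _ => by simp [atomRaise, atomRaise_atomRaise]
  | inter T1 T2 h1 h2 => simp [Ty.raise, atoms, h1, h2, Finset.image_union]
  | _ => simp [Ty.raise, atoms, atomRaise]

lemma atoms_sound {T1 T2 : Ty} (h : TyEq T1 T2) : atoms T1 = atoms T2 := by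
  induction h with
  | refl => rfl
  | symm _ ih => exact ih.symm
  | trans _ _ ih1 ih2 => exact ih1.trans ih2
  | interCongr _ _ ih1 ih2 => simp [atoms, ih1, ih2]
  | arrowCongr _ _ ih1 ih2 => simp [atoms_arrow, normalForm, ih1, ih2]
  | idem => simp [atoms]
  | comm => simp [atoms, Finset.union_comm]
  | assoc => simp [atoms, Finset.union_assoc]
  | distrib => simp [atoms, Finset.image_union]
  | shift =>
    simp only [atoms_arrow, atoms_raise, Finset.image_image]
    exact Finset.image_congr fun c _ => by
      simp only [Function.comp_apply, atomRaise_atomRaise]; congr 3; omega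

lemma tyEq_normalForm (T : Ty) : TyEq T (normalForm T) := by
  induction T with
  | arrow T1 T2 ℓ ih1 ih2 =>
    have hl := toList_atoms_ne_nil T2
    refine (TyEq.arrowCongr ih1 ih2).trans
      ((tyEq_arrow_listInter_atomRaise (normalForm T1) ℓ hl).trans ?_)
    exact tyEq_listInter_of_mem_iff (by simpa using hl) (toList_atoms_ne_nil _)
      fun x => by simp [atoms_arrow]
  | inter T1 T2 ih1 ih2 =>
    have hl1 := toList_atoms_ne_nil T1
    refine (TyEq.interCongr ih1 ih2).trans
      ((tyEq_inter_listInter_append hl1 (toList_atoms_ne_nil T2)).trans ?_)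
    exact tyEq_listInter_of_mem_iff (List.append_ne_nil_of_left_ne_nil hl1 _)
      (toList_atoms_ne_nil _) fun x => by simp [atoms]
  | _ => simpa [normalForm, atoms, listInter] using TyEq.refl

lemma tyEq_of_normalForm_eq {T1 T2 : Ty} (h : normalForm T1 = normalForm T2) : TyEq T1 T2 :=
  (tyEq_normalForm T1).trans (h ▸ (tyEq_normalForm T2).symm)

lemma tyEq_of_atoms_eq {T1 T2 : Ty} (h : atoms T1 = atoms T2) : TyEq T1 T2 :=
  tyEq_of_normalForm_eq (by rw [normalForm, normalForm, h])

lemma atoms_bigInter_map {α : Type*} [DecidableEq α] (f : α → Ty) (a : α) (as : List α) :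
    atoms (bigInter (f a) (as.map f)) = (a :: as).toFinset.biUnion (atoms ∘ f) := by
  induction as generalizing a with
  | nil => simp [bigInter]
  | cons b as ih => simp [bigInter, atoms, ih]

lemma arrow_zero_injective (D : Ty) : Function.Injective (fun c => Ty.prim (.arrow D c) 0) :=
  fun _ _ h => by simpa using h

/-- inversion of congruence for intersections of level-0 arrows. -/
theorem stmt0 (p : Ty × Ty) (ps : List (Ty × Ty)) (T T' : Ty)
    (h : TyEq (bigInter (arr0 p) (ps.map arr0)) (.prim (.arrow T T') 0)) :
    (∀ q ∈ p :: ps, TyEq q.1 T) ∧ TyEq (bigInter p.2 (ps.map Prod.snd)) T' := by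
  have hatoms : (p :: ps).toFinset.biUnion
      (fun q => (atoms q.2).image (fun c => Ty.prim (.arrow (normalForm q.1) c) 0)) =
      (atoms T').image (fun c => Ty.prim (.arrow (normalForm T) c) 0) := by
    rw [← atoms_arrow_zero, ← atoms_sound h, atoms_bigInter_map]
    simp only [Function.comp_def, arr0, atoms_arrow_zero]
  have hdom : ∀ q ∈ p :: ps, normalForm q.1 = normalForm T := by
    intro q hq
    obtain ⟨c, hc⟩ := atoms_nonempty q.2
    have hmem := hatoms ▸ Finset.mem_biUnion.2
      ⟨q, List.mem_toFinset.2 hq, Finset.mem_image_of_mem _ hc⟩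
    obtain ⟨_, _, he⟩ := Finset.mem_image.1 hmem
    simp only [Ty.prim.injEq, PrimTy.arrow.injEq] at he
    exact he.1.1.symm
  refine ⟨fun q hq => tyEq_of_normalForm_eq (hdom q hq), ?_⟩
  rw [Finset.biUnion_congr rfl fun q hq => by rw [hdom q (List.mem_toFinset.1 hq)],
    ← Finset.biUnion_image] at hatoms
  refine tyEq_of_atoms_eq ?_
  rw [atoms_bigInter_map, ← Finset.image_injective (arrow_zero_injective _) hatoms]
  rfl
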